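/- Let 𝓡 be a finite set of finite relations over attribute set 𝓐, and let J = ⋈_{R∈𝓡} R be their natural join. For any relation R ∈ 𝓡, any sets A ⊆ B ⊆ attr(R), and any E ⊆ 𝓐, we have |π_{B∪E}(J)| ≤ |π_{A∪E}(J)| · d, where d = max_{v ∈ π_A(R)} deg(v, π_B(R), A) is the maximum number of tuples in π_B(R) projecting to any given value of A. -/

import Mathlib

open scoped Classical

/-- Projection of a total tuple onto an attribute set. -/
noncomputable def proj {α V : Type*} (A : Finset α) (t : α → V) : α → Option V :=
  fun a => if a ∈ A then some (t a) else none

/-- Projection of a partial tuple onto an attribute set. -/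
noncomputable def projO {α V : Type*} (A : Finset α) (t : α → Option V) : α → Option V :=
  fun a => if a ∈ A then t a else none

/-!
Projecting `π_{B∪E}(J)` onto `A ∪ E` maps it onto `π_{A∪E}(J)`, so it suffices to bound each
fibre by `d`. An element `u = π_{B∪E}(t)` of the fibre over `v` is determined by its `B`-part
together with `v`, and its `B`-part lies in `π_B(R)` and has `A`-part `π_A(v)`; hence the
fibre injects into the set of tuples of `π_B(R)` over `π_A(v)`, which has at most `d` elements.
-/

theorem Set.ncard_le_ncard_image_mul_of_ncard_fiber_le {β γ : Type*} {s : Set β} (f : β → γ)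
    {d : ℕ} (hfiber : ∀ b ∈ f '' s, {x ∈ s | f x = b}.ncard ≤ d) :
    s.ncard ≤ (f '' s).ncard * d := by
  by_cases hs : s.Finite
  · obtain ⟨s, rfl⟩ := hs.exists_finset_coe
    rw [← Finset.coe_image, Set.ncard_coe_finset, Set.ncard_coe_finset, mul_comm]
    refine Finset.card_le_mul_card_image s d fun b hb => ?_
    simpa [← Finset.coe_filter] using hfiber b (by simpa using hb)
  · rw [Set.Infinite.ncard hs]
    exact Nat.zero_le _

section Projection

variable {α V : Type*} {A B C D : Finset α}

theorem projO_proj (h : A ⊆ B) (t : α → V) : projO A (proj B t) = proj A t := by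
  funext a
  by_cases ha : a ∈ A
  · simp [projO, proj, ha, h ha]
  · simp [projO, proj, ha]

theorem projO_projO (h : A ⊆ B) (u : α → Option V) : projO A (projO B u) = projO A u := by
  funext a
  by_cases ha : a ∈ A
  · simp [projO, ha, h ha]
  · simp [projO, ha]

theorem projO_eq_of_projO_eq_of_projO_eq (hD : D ⊆ B ∪ C) {u u' : α → Option V}
    (hB : projO B u = projO B u') (hC : projO C u = projO C u') : projO D u = projO D u' := by
  funext a
  by_cases ha : a ∈ D
  · rcases Finset.mem_union.1 (hD ha) with haB | haC
    · simpa [projO, ha, haB] using congrFun hB a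
    · simpa [projO, ha, haC] using congrFun hC a
  · simp [projO, ha]

end Projection

section Join

variable {α V ι : Type*} (attr : ι → Finset α) (Rel : ι → Finset (α → Option V))

def naturalJoin : Set (α → V) := {t | ∀ i, proj (attr i) t ∈ Rel i}

theorem image_projO_image_proj_naturalJoin {A B : Finset α} (hAB : A ⊆ B) :
    projO A '' (proj B '' naturalJoin attr Rel) = proj A '' naturalJoin attr Rel := by
  simp only [Set.image_image, projO_proj hAB]

theorem ncard_fiber_projO_image_proj_naturalJoin_le {i₀ : ι} {A B : Finset α} (hAB : A ⊆ B)
    (hB : B ⊆ attr i₀) (E : Finset α) {d : ℕ}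
    (hd : ∀ v : α → Option V,
      (((Rel i₀).image (projO B)).filter (fun s => projO A s = v)).card ≤ d)
    (v : α → Option V) :
    {u ∈ proj (B ∪ E) '' naturalJoin attr Rel | projO (A ∪ E) u = v}.ncard ≤ d := by
  have hA : A ⊆ A ∪ E := Finset.subset_union_left
  refine le_trans ?_ (hd (projO A v))
  rw [← Set.ncard_coe_finset]
  refine Set.ncard_le_ncard_of_injOn (projO B) ?_ ?_
  · rintro _ ⟨⟨t, ht, rfl⟩, rfl⟩
    have hBpart : projO B (proj (B ∪ E) t) = projO B (proj (attr i₀) t) := by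
      rw [projO_proj Finset.subset_union_left, projO_proj hB]
    simp only [Finset.coe_filter, Finset.mem_image, Set.mem_ofPred_eq]
    refine ⟨⟨_, ht i₀, hBpart.symm⟩, ?_⟩
    rw [projO_projO hAB, projO_projO hA]
  · rintro _ ⟨⟨t, -, rfl⟩, hv⟩ _ ⟨⟨t', -, rfl⟩, hv'⟩ hBeq
    -- a tuple supported on `B ∪ E` is recovered from its `B`-part and its `(A ∪ E)`-part
    have key := projO_eq_of_projO_eq_of_projO_eq
      (Finset.union_subset_union_right Finset.subset_union_right) hBeq (hv.trans hv'.symm)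
    rwa [projO_proj le_rfl, projO_proj le_rfl] at key

end Join

theorem stmt13_general {α V ι : Type*}
    (attr : ι → Finset α) (Rel : ι → Finset (α → Option V))
    (i₀ : ι) (A B : Finset α) (hAB : A ⊆ B) (hB : B ⊆ attr i₀) (E : Finset α)
    (d : ℕ)
    (hd : ∀ v : α → Option V,
      (((Rel i₀).image (projO B)).filter (fun s => projO A s = v)).card ≤ d) :
    Set.ncard (proj (B ∪ E) '' {t : α → V | ∀ i, proj (attr i) t ∈ Rel i})
      ≤ Set.ncard (proj (A ∪ E) '' {t : α → V | ∀ i, proj (attr i) t ∈ Rel i}) * d := by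
  change (proj (B ∪ E) '' naturalJoin attr Rel).ncard
    ≤ (proj (A ∪ E) '' naturalJoin attr Rel).ncard * d
  rw [← image_projO_image_proj_naturalJoin attr Rel (Finset.union_subset_union_left hAB)]
  exact Set.ncard_le_ncard_image_mul_of_ncard_fiber_le _ fun v _ =>
    ncard_fiber_projO_image_proj_naturalJoin_le attr Rel hAB hB E hd v

/-- For the natural join `J` of a finite family of finite relations covering the attributes,
a relation `R = Rel i₀` with `A ⊆ B ⊆ attr(i₀)`, any `E`, and `d` an upper bound on the
degree `deg(v, π_B(R), A)` of every value `v`, we have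
`|π_{B∪E}(J)| ≤ |π_{A∪E}(J)| · d`. -/
theorem stmt13 {α V ι : Type*} [Fintype ι]
    (attr : ι → Finset α) (Rel : ι → Finset (α → Option V))
    (hcov : ∀ a : α, ∃ i, a ∈ attr i)
    (i₀ : ι) (A B : Finset α) (hAB : A ⊆ B) (hB : B ⊆ attr i₀) (E : Finset α)
    (d : ℕ)
    (hd : ∀ v : α → Option V,
      (((Rel i₀).image (projO B)).filter (fun s => projO A s = v)).card ≤ d) :
    Set.ncard (proj (B ∪ E) '' {t : α → V | ∀ i, proj (attr i) t ∈ Rel i})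
      ≤ Set.ncard (proj (A ∪ E) '' {t : α → V | ∀ i, proj (attr i) t ∈ Rel i}) * d :=
  stmt13_general attr Rel i₀ A B hAB hB E d hd
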